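/- arXiv:0906.4678 — 5 statements merged into one kernel-verified Lean document; each statement's English description precedes it below -/
import Mathlib

section
/- If f : ℝ → ℂ is integrable and causal (f(t) = 0 for all t < 0), then its Fourier transform F(ω) = (1/√(2π)) ∫ exp(iωt) f(t) dt extends holomorphically to the upper-half complex plane {z : Im z > 0}. -/
open MeasureTheory Complex Real

/-!
For `Im z ≥ 0` and `t ≥ 0` we have `‖exp (i z t)‖ = exp (-(Im z) t) ≤ 1`, so causality makes
`‖f‖` an integrable majorant of `t ↦ exp (i z t) f t` uniformly on the closed upper half plane;
dominated convergence gives continuity there. On `{Im z > a}` with `a > 0` the `z`-derivative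
`i t exp (i z t) f t` is dominated by `‖f‖ / a`, because `t exp (-a t) ≤ 1 / a`; differentiation
under the integral sign gives holomorphy on the open half plane.
-/

lemma norm_cexp_I_mul_mul_ofReal (z : ℂ) (t : ℝ) :
    ‖cexp (I * z * t)‖ = Real.exp (-(z.im * t)) := by
  rw [norm_exp]
  congr 1
  simp [mul_re, mul_im]

lemma mul_exp_neg_mul_le_inv {a : ℝ} (ha : 0 < a) (t : ℝ) : t * Real.exp (-(a * t)) ≤ a⁻¹ := by
  rw [Real.exp_neg, ← div_eq_mul_inv, div_le_iff₀ (Real.exp_pos _), inv_mul_eq_div,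
    le_div_iff₀ ha]
  linarith [Real.add_one_le_exp (a * t)]

section Causal

variable {f : ℝ → ℂ}

lemma aestronglyMeasurable_cexp_I_mul_mul (hf : AEStronglyMeasurable f) (z : ℂ) :
    AEStronglyMeasurable (fun t : ℝ => cexp (I * z * t) * f t) :=
  (by fun_prop : Continuous fun t : ℝ => cexp (I * z * t)).aestronglyMeasurable.mul hf

lemma norm_cexp_I_mul_mul_le_of_causal (hcausal : ∀ t : ℝ, t < 0 → f t = 0) {z : ℂ}
    (hz : 0 ≤ z.im) (t : ℝ) : ‖cexp (I * z * t) * f t‖ ≤ ‖f t‖ := by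
  rcases lt_or_ge t 0 with ht | ht
  · simp [hcausal t ht]
  · rw [norm_mul, norm_cexp_I_mul_mul_ofReal]
    exact mul_le_of_le_one_left (norm_nonneg _)
      (Real.exp_le_one_iff.2 (neg_nonpos.2 (mul_nonneg hz ht)))

lemma norm_cexp_I_mul_mul_I_mul_le_of_causal (hcausal : ∀ t : ℝ, t < 0 → f t = 0) {a : ℝ}
    (ha : 0 < a) {z : ℂ} (hz : a ≤ z.im) (t : ℝ) :
    ‖cexp (I * z * t) * (I * t) * f t‖ ≤ a⁻¹ * ‖f t‖ := by
  rcases lt_or_ge t 0 with ht | ht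
  · simp [hcausal t ht]
  · rw [norm_mul, norm_mul, norm_cexp_I_mul_mul_ofReal, norm_mul, norm_I, one_mul, norm_real,
      Real.norm_of_nonneg ht]
    refine mul_le_mul_of_nonneg_right ?_ (norm_nonneg _)
    calc Real.exp (-(z.im * t)) * t ≤ t * Real.exp (-(a * t)) := by
          rw [mul_comm]
          gcongr
      _ ≤ a⁻¹ := mul_exp_neg_mul_le_inv ha t

lemma hasDerivAt_cexp_I_mul_mul (c : ℂ) (t : ℝ) (z : ℂ) :
    HasDerivAt (fun z : ℂ => cexp (I * z * t) * c) (cexp (I * z * t) * (I * t) * c) z := by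
  have h : HasDerivAt (fun z : ℂ => I * z * t) (I * t) z := by
    simpa using ((hasDerivAt_id z).const_mul I).mul_const (t : ℂ)
  exact h.cexp.mul_const c

lemma continuousOn_integral_cexp_I_mul_mul_of_causal (hf : Integrable f)
    (hcausal : ∀ t : ℝ, t < 0 → f t = 0) :
    ContinuousOn (fun z : ℂ => ∫ t : ℝ, cexp (I * z * t) * f t) {z : ℂ | 0 ≤ z.im} :=
  continuousOn_of_dominated
    (fun z _ => aestronglyMeasurable_cexp_I_mul_mul hf.aestronglyMeasurable z)
    (fun _ hz => .of_forall (norm_cexp_I_mul_mul_le_of_causal hcausal hz)) hf.norm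
    (.of_forall fun _ => (by fun_prop : Continuous _).continuousOn)

lemma differentiableOn_integral_cexp_I_mul_mul_of_causal (hf : Integrable f)
    (hcausal : ∀ t : ℝ, t < 0 → f t = 0) :
    DifferentiableOn ℂ (fun z : ℂ => ∫ t : ℝ, cexp (I * z * t) * f t) {z : ℂ | 0 < z.im} := by
  intro z₀ hz₀
  set a := z₀.im / 2
  have ha : 0 < a := half_pos hz₀
  have hnhds : {z : ℂ | a < z.im} ∈ nhds z₀ :=
    (isOpen_lt continuous_const continuous_im).mem_nhds (show a < z₀.im from half_lt_self hz₀)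
  have hmeas := aestronglyMeasurable_cexp_I_mul_mul hf.aestronglyMeasurable
  have hint : Integrable (fun t : ℝ => cexp (I * z₀ * t) * f t) :=
    hf.norm.mono' (hmeas z₀) (.of_forall (norm_cexp_I_mul_mul_le_of_causal hcausal hz₀.le))
  have hderiv_meas : AEStronglyMeasurable (fun t : ℝ => cexp (I * z₀ * t) * (I * t) * f t) :=
    (by fun_prop : Continuous fun t : ℝ => cexp (I * z₀ * t) * (I * t)).aestronglyMeasurable.mul
      hf.aestronglyMeasurable
  have hderiv_bound : ∀ t : ℝ, ∀ z ∈ {z : ℂ | a < z.im},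
      ‖cexp (I * z * t) * (I * t) * f t‖ ≤ a⁻¹ * ‖f t‖ := fun t _ hz =>
    norm_cexp_I_mul_mul_I_mul_le_of_causal hcausal ha (le_of_lt hz) t
  exact (hasDerivAt_integral_of_dominated_loc_of_deriv_le hnhds (.of_forall hmeas) hint
    hderiv_meas (.of_forall hderiv_bound) (hf.norm.const_mul a⁻¹)
    (.of_forall fun t z _ => hasDerivAt_cexp_I_mul_mul (f t) t z)).2
    |>.differentiableAt.differentiableWithinAt

end Causal

/-- If `f : ℝ → ℂ` is integrable and causal (`f t = 0` for `t < 0`), then its Fourier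
transform `F ω = (1/√(2π)) ∫ exp(iωt) f t dt` extends holomorphically to the upper half
plane: the function `z ↦ (1/√(2π)) ∫ exp(izt) f t dt` (which agrees with `F` on `ℝ`) is
holomorphic on `{z | 0 < Im z}` and continuous on `{z | 0 ≤ Im z}`. -/
theorem stmt0 (f : ℝ → ℂ) (hf : Integrable f) (hcausal : ∀ t : ℝ, t < 0 → f t = 0) :
    DifferentiableOn ℂ
      (fun z : ℂ => ((1 / Real.sqrt (2 * π) : ℝ) : ℂ) *
        ∫ t : ℝ, Complex.exp (Complex.I * z * (t : ℂ)) * f t)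
      {z : ℂ | 0 < z.im} ∧
    ContinuousOn
      (fun z : ℂ => ((1 / Real.sqrt (2 * π) : ℝ) : ℂ) *
        ∫ t : ℝ, Complex.exp (Complex.I * z * (t : ℂ)) * f t)
      {z : ℂ | 0 ≤ z.im} :=
  ⟨(differentiableOn_integral_cexp_I_mul_mul_of_causal hf hcausal).const_mul _,
    continuousOn_const.mul (continuousOn_integral_cexp_I_mul_mul_of_causal hf hcausal)⟩
end

section
/- The function K_{T^{1/2}}(t) = H(t) · e^{-t/τ₀} / (Γ(1/2) · τ₀^{1/2} · t^{1/2}) (with H the Heaviside function and τ₀ > 0) has Fourier transform (1/√(2π)) ∫_ℝ e^{iωt} K_{T^{1/2}}(t) dt equal to (1/√(2π)) · (1 - iωτ₀)^{-1/2}, where the principal square root branch is used. -/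
open MeasureTheory Complex Real

/-! Multiplying by `e^{iωt}` turns the kernel into `e^{-zt} / √t` on `t > 0`, with
`z = 1/τ₀ - iω` and `Re z > 0`. The substitution `t = u²` makes this a complex Gaussian integral,
`√(π / z) = Γ(1/2) z^{-1/2}`, and since `1 - iωτ₀ = τ₀ z` with `τ₀ > 0` real, the principal power
splits as `τ₀^{-1/2} z^{-1/2}`. -/

lemma ofReal_mul_cpow {r : ℝ} (hr : 0 < r) (w c : ℂ) :
    ((r : ℂ) * w) ^ c = (r : ℂ) ^ c * w ^ c := by
  rcases eq_or_ne w 0 with rfl | hw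
  · rcases eq_or_ne c 0 with rfl | hc
    · simp
    · simp [zero_cpow hc]
  have hr' : (r : ℂ) ≠ 0 := ofReal_ne_zero.mpr hr.ne'
  rw [cpow_def_of_ne_zero (mul_ne_zero hr' hw), cpow_def_of_ne_zero hr', cpow_def_of_ne_zero hw,
    log_ofReal_mul hr hw, add_mul, Complex.exp_add, ofReal_log hr.le]

lemma integral_div_sqrt_Ioi (g : ℝ → ℂ) :
    ∫ t in Set.Ioi (0 : ℝ), g t / (√t : ℂ) = ∫ u in Set.Ioi (0 : ℝ), 2 * g (u ^ 2) := by
  rw [← integral_comp_rpow_Ioi_of_pos (g := fun t ↦ g t / (√t : ℂ)) two_pos]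
  refine setIntegral_congr_fun measurableSet_Ioi fun u (hu : 0 < u) ↦ ?_
  have hu' : (u : ℂ) ≠ 0 := ofReal_ne_zero.mpr hu.ne'
  simp only [Real.rpow_two, show (2 : ℝ) - 1 = 1 by norm_num, Real.rpow_one, Real.sqrt_sq hu.le,
    real_smul]
  push_cast
  field_simp

lemma integral_exp_neg_mul_div_sqrt_Ioi {z : ℂ} (hz : 0 < z.re) :
    ∫ t in Set.Ioi (0 : ℝ), cexp (-(z * t)) / (√t : ℂ) =
      Real.Gamma (1 / 2) * z ^ (-(1 / 2 : ℂ)) := by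
  have harg : z.arg ≠ π := fun h ↦ by linarith [((arg_eq_pi_iff).mp h).1]
  simp_rw [integral_div_sqrt_Ioi, ← neg_mul, ofReal_pow]
  rw [integral_const_mul, integral_gaussian_complex_Ioi hz, div_eq_mul_inv (π : ℂ),
    ofReal_mul_cpow pi_pos, inv_cpow _ _ harg, ← cpow_neg, Real.Gamma_one_half_eq,
    Real.sqrt_eq_rpow, ofReal_cpow pi_pos.le]
  push_cast
  ring

lemma ofReal_cpow_neg_half {r : ℝ} (hr : 0 ≤ r) : (r : ℂ) ^ (-(1 / 2 : ℂ)) = ((√r)⁻¹ : ℝ) := by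
  rw [show -(1 / 2 : ℂ) = ((-(1 / 2) : ℝ) : ℂ) by push_cast; ring, ← ofReal_cpow hr,
    Real.rpow_neg hr, Real.sqrt_eq_rpow]

lemma cexp_mul_ite_exp_div_sqrt (τ₀ C ω t : ℝ) :
    cexp (I * ω * t) * (if 0 < t then ((Real.exp (-t / τ₀) / (C * √t) : ℝ) : ℂ) else 0) =
      Set.indicator (Set.Ioi 0)
        (fun s : ℝ ↦ (C : ℂ)⁻¹ * (cexp (-(((τ₀ : ℂ)⁻¹ - I * ω) * s)) / (√s : ℂ))) t := by
  by_cases ht : 0 < t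
  · have hexp : cexp (-(((τ₀ : ℂ)⁻¹ - I * ω) * t)) = cexp (I * ω * t) * cexp (-t / τ₀) := by
      rw [← Complex.exp_add]; congr 1; field_simp; ring
    rw [Set.indicator_of_mem (Set.mem_Ioi.mpr ht), if_pos ht, hexp]
    push_cast
    field_simp
  · rw [Set.indicator_of_notMem (by simpa using ht), if_neg ht, mul_zero]

/-- The relaxation kernel `K(t) = H(t) e^{-t/τ₀} / (Γ(1/2) τ₀^{1/2} t^{1/2})` has Fourier
transform `(1/√(2π)) ∫ e^{iωt} K(t) dt = (1/√(2π)) (1 - iωτ₀)^{-1/2}` (principal branch). -/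
theorem stmt3 (τ₀ : ℝ) (hτ : 0 < τ₀) (ω : ℝ) :
    ((1 / Real.sqrt (2 * π) : ℝ) : ℂ) *
      ∫ t : ℝ, Complex.exp (Complex.I * (ω : ℂ) * (t : ℂ)) *
        (if 0 < t then
          ((Real.exp (-t / τ₀) / (Real.Gamma (1/2) * Real.sqrt τ₀ * Real.sqrt t) : ℝ) : ℂ)
         else 0)
    = ((1 / Real.sqrt (2 * π) : ℝ) : ℂ) *
        (1 - Complex.I * (ω : ℂ) * (τ₀ : ℂ)) ^ (-(1/2 : ℂ)) := by
  set z : ℂ := (τ₀ : ℂ)⁻¹ - I * ω with hz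
  have hzre : 0 < z.re := by simp [z]; positivity
  have hfactor : 1 - I * ω * τ₀ = τ₀ * z := by
    rw [hz, mul_sub, mul_inv_cancel₀ (ofReal_ne_zero.mpr hτ.ne')]; ring
  simp_rw [cexp_mul_ite_exp_div_sqrt τ₀]
  rw [integral_indicator measurableSet_Ioi, integral_const_mul,
    integral_exp_neg_mul_div_sqrt_Ioi hzre, hfactor, ofReal_mul_cpow hτ, ofReal_cpow_neg_half hτ.le]
  have hΓ : (Real.Gamma (1 / 2) : ℂ) ≠ 0 :=
    ofReal_ne_zero.mpr (Real.Gamma_pos_of_pos one_half_pos).ne'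
  push_cast
  field_simp
end

section
/- Let τ₀ > 0, c₀ > 0, α₁ ≥ 0 and define α_*^c(ω) = -α₁·iω / (c₀·√(1 - τ₀ iω)) with principal square root. Then Re(α_*^c(ω)) ≥ 0 for all ω ∈ ℝ, and Re(α_*^c(ω)) = Re(α_*(ω)) where α_*(ω) = iω/c₀ - iω/(c₀√(1 - τ₀ iω)) is the thermo-viscous attenuation coefficient. -/
open MeasureTheory Complex Real

/-!
Writing `w` for the principal square root of `1 - τ₀iω`, the real part of `a·iω / (c₀ w)` is
`a ω (Im w) / (c₀ |w|²)`. The principal square root has imaginary part of the same sign as its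
argument, here `-τ₀ω`, so `ω · Im w ≤ 0` and the causal coefficient (`a = -α₁`) has nonnegative
real part. The extra term `iω/c₀` of the thermo-viscous coefficient is purely imaginary.
-/

namespace Complex

theorem im_mul_im_cpow_inv_two_nonneg (z : ℂ) : 0 ≤ z.im * (z ^ (2⁻¹ : ℂ)).im := by
  rcases le_or_gt 0 z.im with hz | hz
  · rw [cpow_inv_two_im_eq_sqrt hz]
    exact mul_nonneg hz (Real.sqrt_nonneg _)
  · rw [cpow_inv_two_im_eq_neg_sqrt hz]
    exact mul_nonneg_of_nonpos_of_nonpos hz.le (neg_nonpos.mpr (Real.sqrt_nonneg _))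

theorem re_ofReal_mul_I_mul_ofReal_div_ofReal_mul (a b c : ℝ) (w : ℂ) :
    ((a : ℂ) * I * b / (c * w)).re = a * b * w.im / (c * normSq w) := by
  simp only [div_re, mul_re, mul_im, ofReal_re, ofReal_im, I_re, I_im, normSq_mul, normSq_ofReal]
  rcases eq_or_ne c 0 with rfl | hc
  · simp
  · field_simp
    ring

end Complex

/-- For `τ₀ > 0`, `c₀ > 0`, `α₁ ≥ 0` and the causal attenuation coefficient
`α_*^c(ω) = -α₁ iω/(c₀ √(1-τ₀iω))` (principal square root), `Re(α_*^c(ω)) ≥ 0` for all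
real `ω`; and (for `α₁ = 1`) `Re(α_*^c) = Re(α_*)`, where
`α_*(ω) = iω/c₀ - iω/(c₀√(1-τ₀iω))` is the thermo-viscous attenuation coefficient. -/
theorem stmt9 (τ₀ c₀ α₁ : ℝ) (hτ : 0 < τ₀) (hc : 0 < c₀) (hα : 0 ≤ α₁) :
    (∀ ω : ℝ,
      0 ≤ ((-(α₁ : ℂ)) * Complex.I * (ω : ℂ) /
        ((c₀ : ℂ) * (1 - (τ₀ : ℂ) * Complex.I * (ω : ℂ)) ^ ((1/2 : ℂ)))).re) ∧
    (α₁ = 1 → ∀ ω : ℝ,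
      ((-(α₁ : ℂ)) * Complex.I * (ω : ℂ) /
        ((c₀ : ℂ) * (1 - (τ₀ : ℂ) * Complex.I * (ω : ℂ)) ^ ((1/2 : ℂ)))).re
      = (Complex.I * (ω : ℂ) / (c₀ : ℂ) -
         Complex.I * (ω : ℂ) /
           ((c₀ : ℂ) * (1 - (τ₀ : ℂ) * Complex.I * (ω : ℂ)) ^ ((1/2 : ℂ)))).re) := by
  rw [one_div]
  refine ⟨fun ω => ?_, fun hα₁ ω => ?_⟩
  · set w := (1 - (τ₀ : ℂ) * I * ω) ^ (2⁻¹ : ℂ)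
    have hsign : 0 ≤ -(τ₀ * ω) * w.im := by
      simpa using im_mul_im_cpow_inv_two_nonneg (1 - (τ₀ : ℂ) * I * ω)
    have hωw : ω * w.im ≤ 0 := by nlinarith
    rw [← ofReal_neg, re_ofReal_mul_I_mul_ofReal_div_ofReal_mul]
    exact div_nonneg (by nlinarith) (mul_nonneg hc.le (normSq_nonneg w))
  · subst hα₁
    have hreal : (I * ω / c₀).re = 0 := by simp [div_re]
    rw [sub_re, hreal, zero_sub, ← neg_re, ← neg_div, ofReal_one, neg_one_mul, neg_mul]
end

section
/- Let γ ∈ (1,2], τ₀ > 0, α₁ > 0, c₀ > 0, and α_*(ω) = -α₁ iω / (c₀ √(1 + (-iτ₀ω)^{γ-1})) with principal branches. Then Re(α_*(ω)) / |ω|^γ → α₁ · τ₀^{γ-1} · sin(π(γ-1)/2) / (2c₀) as ω → 0⁺; i.e., for small ω, α(ω) ∼ α₀ |τ₀ ω|^γ with α₀ = α₁ sin(π(γ-1)/2)/(2τ₀ c₀). -/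
/-! With `r = (τ₀ω)^(γ-1)` and `c = exp(-iπ(γ-1)/2)`, the principal branch gives
`(-iτ₀ω)^(γ-1) = r c`, and then `Re α_*(ω) / ω^γ = (α₁ τ₀^(γ-1) / c₀) · Im((1 + r c)^(-1/2)) / r`.
As `ω → 0⁺` also `r → 0⁺`, so the last quotient tends to the derivative at `0` of
`r ↦ Im (1 + r c)^(-1/2)`, namely `Im(-c/2) = sin(π(γ-1)/2) / 2`. -/

open Complex Real Filter Topology

namespace Complex

lemma neg_I_mul_ofReal_cpow {x : ℝ} (hx : 0 < x) (a : ℝ) :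
    (-(I * x)) ^ (a : ℂ) = ((x ^ a : ℝ) : ℂ) * exp ((-(π * a / 2) : ℝ) * I) := by
  rw [show -(I * x) = x * (-I) by ring, cpow_def_of_ne_zero (by simp [hx.ne']),
    log_ofReal_mul hx (by simp), log_neg_I, Real.rpow_def_of_pos hx, ofReal_exp, ← exp_add]
  congr 1
  push_cast
  ring

lemma hasDerivAt_one_add_ofReal_mul_cpow (c s : ℂ) :
    HasDerivAt (fun r : ℝ => (1 + r * c) ^ s) (s * c) 0 := by
  have hlin : HasDerivAt (fun z : ℂ => 1 + z * c) c 0 := by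
    simpa using ((hasDerivAt_id (0 : ℂ)).mul_const c).const_add 1
  simpa using (hlin.cpow_const (by simp)).comp_ofReal (z := 0)

lemma tendsto_im_div_of_hasDerivAt {g : ℝ → ℂ} {g' : ℂ} (hg : HasDerivAt g g' 0)
    (h0 : (g 0).im = 0) : Tendsto (fun r => (g r).im / r) (𝓝[≠] 0) (𝓝 g'.im) := by
  have him : HasDerivAt (fun r => (g r).im) g'.im 0 := imCLM.hasFDerivAt.comp_hasDerivAt 0 hg
  simpa [slope_fun_def_field, h0] using hasDerivAt_iff_tendsto_slope.mp him

end Complex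

lemma tendsto_mul_rpow_nhdsGT_zero {b a : ℝ} (hb : 0 < b) (ha : 0 < a) :
    Tendsto (fun x : ℝ => (b * x) ^ a) (𝓝[>] 0) (𝓝[>] 0) := by
  refine tendsto_nhdsWithin_of_tendsto_nhds_of_eventually_within _ ?_ ?_
  · have : ContinuousAt (fun x : ℝ => (b * x) ^ a) 0 := by
      fun_prop (disch := exact Or.inr ha.le)
    simpa [Real.zero_rpow ha.ne'] using this.tendsto.mono_left nhdsWithin_le_nhds
  · filter_upwards [self_mem_nhdsWithin] with x hx
    exact Real.rpow_pos_of_pos (mul_pos hb hx) a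

lemma re_neg_mul_I_div_one_add_cpow_div_rpow {γ τ₀ ω : ℝ} (α₁ c₀ : ℝ) (hτ : 0 < τ₀)
    (hω : 0 < ω) :
    ((-(α₁ : ℂ)) * I * ω / (c₀ * (1 + (-(I * τ₀ * ω)) ^ ((γ - 1 : ℝ) : ℂ)) ^ (1/2 : ℂ))).re
        / |ω| ^ γ
      = α₁ * τ₀ ^ (γ - 1) / c₀ *
        (((1 + ((τ₀ * ω) ^ (γ - 1) : ℝ) * exp ((-(π * (γ - 1) / 2) : ℝ) * I)) ^ (-(1/2) : ℂ)).im
          / (τ₀ * ω) ^ (γ - 1)) := by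
  rw [show I * τ₀ * ω = I * ((τ₀ * ω : ℝ) : ℂ) by push_cast; ring,
    neg_I_mul_ofReal_cpow (mul_pos hτ hω), cpow_neg]
  set w := (1 + ((τ₀ * ω) ^ (γ - 1) : ℝ) * exp ((-(π * (γ - 1) / 2) : ℝ) * I)) ^ (1/2 : ℂ)
  have hre : ((-(α₁ : ℂ)) * I * ω / (c₀ * w)).re = α₁ * ω / c₀ * w⁻¹.im := by
    rw [div_eq_mul_inv, mul_inv, show (-(α₁ : ℂ)) * I * ω * ((c₀ : ℂ)⁻¹ * w⁻¹)
      = I * ((-(α₁ * ω / c₀) : ℝ) : ℂ) * w⁻¹ by push_cast; ring]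
    simp [mul_re]
  rw [hre, abs_of_pos hω, Real.mul_rpow hτ.le hω.le,
    show ω ^ γ = ω * ω ^ (γ - 1) by
      conv_lhs => rw [show γ = 1 + (γ - 1) by ring, Real.rpow_add hω, Real.rpow_one]]
  have hτγ := (Real.rpow_pos_of_pos hτ (γ - 1)).ne'
  have hωγ := (Real.rpow_pos_of_pos hω (γ - 1)).ne'
  field_simp

theorem stmt11_general (γ τ₀ α₁ c₀ : ℝ) (hγ1 : 1 < γ) (hτ : 0 < τ₀) :
    Tendsto
      (fun ω : ℝ =>
        (((-(α₁ : ℂ)) * Complex.I * (ω : ℂ) /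
          ((c₀ : ℂ) *
            (1 + (-(Complex.I * (τ₀ : ℂ) * (ω : ℂ))) ^ (((γ - 1 : ℝ)) : ℂ)) ^ ((1/2 : ℂ)))).re)
          / |ω| ^ γ)
      (nhdsWithin 0 (Set.Ioi 0))
      (nhds (α₁ * τ₀ ^ (γ - 1) * Real.sin (π * (γ - 1) / 2) / (2 * c₀))) := by
  set θ := π * (γ - 1) / 2
  have hslope := tendsto_im_div_of_hasDerivAt
    (hasDerivAt_one_add_ofReal_mul_cpow (exp ((-θ : ℝ) * I)) (-(1/2))) (by simp)
  have hsub := (tendsto_mul_rpow_nhdsGT_zero hτ (sub_pos.mpr hγ1)).mono_right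
    (nhdsWithin_mono 0 fun x (hx : 0 < x) => hx.ne')
  have hlim := ((hslope.comp hsub).const_mul (α₁ * τ₀ ^ (γ - 1) / c₀))
  have hval : (-(1/2) * exp ((-θ : ℝ) * I)).im = Real.sin θ / 2 := by
    rw [show (-(1/2) : ℂ) = ((-(1/2) : ℝ) : ℂ) by push_cast; ring, im_ofReal_mul,
      exp_ofReal_mul_I_im, Real.sin_neg]
    ring
  rw [hval] at hlim
  rw [show α₁ * τ₀ ^ (γ - 1) * Real.sin θ / (2 * c₀) = α₁ * τ₀ ^ (γ - 1) / c₀ * (Real.sin θ / 2)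
    by ring]
  refine hlim.congr' ?_
  filter_upwards [self_mem_nhdsWithin] with ω hω
  exact (re_neg_mul_I_div_one_add_cpow_div_rpow α₁ c₀ hτ hω).symm

/-- For `γ ∈ (1,2]`, `τ₀ > 0`, `α₁ > 0`, `c₀ > 0` and
`α_*(ω) = -α₁ iω/(c₀ √(1 + (-iτ₀ω)^{γ-1}))` (principal branches),
`Re(α_*(ω))/|ω|^γ → α₁ τ₀^{γ-1} sin(π(γ-1)/2)/(2c₀)` as `ω → 0⁺`: for small frequencies
the attenuation law is a frequency power law with exponent `γ`. -/
theorem stmt11 (γ τ₀ α₁ c₀ : ℝ) (hγ1 : 1 < γ) (hγ2 : γ ≤ 2) (hτ : 0 < τ₀) (hα : 0 < α₁)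
    (hc : 0 < c₀) :
    Tendsto
      (fun ω : ℝ =>
        (((-(α₁ : ℂ)) * Complex.I * (ω : ℂ) /
          ((c₀ : ℂ) *
            (1 + (-(Complex.I * (τ₀ : ℂ) * (ω : ℂ))) ^ (((γ - 1 : ℝ)) : ℂ)) ^ ((1/2 : ℂ)))).re)
          / |ω| ^ γ)
      (nhdsWithin 0 (Set.Ioi 0))
      (nhds (α₁ * τ₀ ^ (γ - 1) * Real.sin (π * (γ - 1) / 2) / (2 * c₀))) :=
  stmt11_general γ τ₀ α₁ c₀ hγ1 hτ
end

section
/- For the principal-branch function ω ↦ exp(-c·(-iω)^γ) with c > 0: if 0 < γ < 1 then this function is bounded on the closed upper half plane {Im z ≥ 0} (substituting ω ↦ z), whereas if 1 < γ < 2 it is unbounded on the upper half plane. In particular, for γ ∈ (1,2) the inverse Fourier transform of exp(-c(-iω)^γ) cannot be a causal function/distribution of exponential type. -/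
/-!
Write `w = -iz`, so that `Im z ≥ 0` means `Re w ≥ 0`, i.e. `|arg w| ≤ π/2`, and
`‖exp (-c w^γ)‖ = exp (-c |w|^γ cos (γ arg w))`. For `γ ≤ 1` the angle `γ arg w` stays in
`[-π/2, π/2]`, so the cosine is nonnegative and the norm is at most `1`. For `γ > 1` the ray
`arg w = π/(γ+1)` lies in the open right half plane while `γ arg w ∈ (π/2, π)`, so along it the
exponent `-c |w|^γ cos (γ arg w)` tends to `+∞`.
-/

open Complex Real Filter

lemma norm_exp_neg_ofReal_mul (c : ℝ) (w : ℂ) :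
    ‖exp (-((c : ℂ) * w))‖ = Real.exp (-(c * w.re)) := by
  simp [norm_exp]

lemma re_cpow_ofReal_nonneg {w : ℂ} (hw : 0 ≤ w.re) {γ : ℝ} (hγ0 : 0 ≤ γ) (hγ1 : γ ≤ 1) :
    0 ≤ (w ^ (γ : ℂ)).re := by
  have harg : |arg w * γ| ≤ π / 2 := by
    rw [abs_mul, abs_of_nonneg hγ0]
    calc |arg w| * γ ≤ π / 2 * 1 :=
          mul_le_mul (abs_arg_le_pi_div_two_iff.2 hw) hγ1 hγ0 (by positivity)
      _ = π / 2 := mul_one _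
  rw [cpow_ofReal_re]
  exact mul_nonneg (by positivity) (Real.cos_nonneg_of_mem_Icc (abs_le.1 harg))

lemma norm_exp_neg_mul_cpow_le_one {c : ℝ} (hc : 0 ≤ c) {w : ℂ} (hw : 0 ≤ w.re) {γ : ℝ}
    (hγ0 : 0 ≤ γ) (hγ1 : γ ≤ 1) : ‖exp (-((c : ℂ) * w ^ (γ : ℂ)))‖ ≤ 1 := by
  rw [norm_exp_neg_ofReal_mul, Real.exp_le_one_iff, neg_nonpos]
  exact mul_nonneg hc (re_cpow_ofReal_nonneg hw hγ0 hγ1)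

lemma re_cpow_ofReal_mul_exp_mul_I {R : ℝ} (hR : 0 < R) {φ : ℝ} (hφ : φ ∈ Set.Ioc (-π) π)
    (γ : ℝ) : (((R : ℂ) * exp (φ * I)) ^ (γ : ℂ)).re = R ^ γ * Real.cos (φ * γ) := by
  have harg : toIocMod Real.two_pi_pos (-π) φ = φ :=
    toIocMod_eq_self _ |>.2 (by rwa [neg_add_eq_sub, two_mul, add_sub_cancel_right])
  rw [cpow_ofReal_re, arg_real_mul _ hR, arg_exp_mul_I, harg, norm_mul, norm_exp_ofReal_mul_I,
    mul_one, norm_real, Real.norm_of_nonneg hR.le]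

lemma tendsto_re_cpow_ofReal_mul_exp_mul_I_atBot {φ γ : ℝ} (hφ : φ ∈ Set.Ioc (-π) π)
    (hγ : 0 < γ) (hcos : Real.cos (φ * γ) < 0) :
    Tendsto (fun R : ℝ => (((R : ℂ) * exp (φ * I)) ^ (γ : ℂ)).re) atTop atBot := by
  refine ((tendsto_rpow_atTop hγ).atTop_mul_const_of_neg hcos).congr' ?_
  filter_upwards [eventually_gt_atTop 0] with R hR
  rw [re_cpow_ofReal_mul_exp_mul_I hR hφ]

lemma tendsto_norm_exp_neg_mul_cpow_atTop {c : ℝ} (hc : 0 < c) {φ γ : ℝ}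
    (hφ : φ ∈ Set.Ioc (-π) π) (hγ : 0 < γ) (hcos : Real.cos (φ * γ) < 0) :
    Tendsto (fun R : ℝ => ‖exp (-((c : ℂ) * ((R : ℂ) * exp (φ * I)) ^ (γ : ℂ)))‖)
      atTop atTop := by
  simp only [norm_exp_neg_ofReal_mul]
  exact tendsto_exp_atTop.comp <| tendsto_neg_atBot_atTop.comp <|
    (tendsto_re_cpow_ofReal_mul_exp_mul_I_atBot hφ hγ hcos).const_mul_atBot hc

lemma cos_pi_div_add_one_mul_neg {γ : ℝ} (hγ : 1 < γ) : Real.cos (π / (γ + 1) * γ) < 0 := by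
  have hpos : 0 < γ + 1 := by linarith
  apply Real.cos_neg_of_pi_div_two_lt_of_lt
  · rw [div_mul_eq_mul_div, lt_div_iff₀ hpos]
    nlinarith [Real.pi_pos]
  · rw [div_mul_eq_mul_div, div_lt_iff₀ hpos]
    nlinarith [Real.pi_pos]

/-- For `c > 0` and the principal-branch function `z ↦ exp(-c(-iz)^γ)`: if `0 < γ < 1`
it is bounded on the closed upper half plane, whereas if `1 < γ < 2` it is unbounded on
the (open) upper half plane. -/
theorem stmt17 (c γ : ℝ) (hc : 0 < c) :
    ((0 < γ ∧ γ < 1) → ∃ C : ℝ, ∀ z : ℂ, 0 ≤ z.im →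
      ‖Complex.exp (-((c : ℂ) * (-(Complex.I * z)) ^ ((γ : ℝ) : ℂ)))‖ ≤ C) ∧
    ((1 < γ ∧ γ < 2) → ∀ C : ℝ, ∃ z : ℂ, 0 < z.im ∧
      C < ‖Complex.exp (-((c : ℂ) * (-(Complex.I * z)) ^ ((γ : ℝ) : ℂ)))‖) := by
  constructor
  · rintro ⟨hγ0, hγ1⟩
    exact ⟨1, fun z hz => norm_exp_neg_mul_cpow_le_one hc.le (by simpa using hz) hγ0.le hγ1.le⟩
  · rintro ⟨hγ1, -⟩ C
    set φ := π / (γ + 1)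
    have hφ0 : 0 < φ := by positivity
    have hφ : φ < π / 2 := by
      rw [div_lt_div_iff_of_pos_left Real.pi_pos (by linarith) two_pos]
      linarith
    obtain ⟨R, hR, hCR⟩ := ((eventually_gt_atTop 0).and
      ((tendsto_norm_exp_neg_mul_cpow_atTop hc ⟨by linarith, by linarith⟩ (by linarith)
        (cos_pi_div_add_one_mul_neg hγ1)).eventually_gt_atTop C)).exists
    refine ⟨I * (R * exp (φ * I)), ?_, ?_⟩
    · have : 0 < Real.cos φ := Real.cos_pos_of_mem_Ioo ⟨by linarith, hφ⟩
      simpa [exp_ofReal_mul_I_re] using mul_pos hR this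
    · rwa [← mul_assoc, I_mul_I, neg_one_mul, neg_neg]
end
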